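/- arXiv:2104.09761 — 5 statements merged into one kernel-verified Lean document; each statement's English description precedes it below -/
import Mathlib

section
/- Let l be a prime number, s a positive integer, and S a finite set of prime numbers. Then there exists an integer N > 1 such that: (i) N is not divisible by l nor by any prime in S; (ii) letting r denote the multiplicative order of l modulo N (the least positive integer with N ∣ l^r − 1), s divides r; and (iii) if r is even, then N does not divide l^{r/2} + 1. -/
/-! Take a prime `t ≥ 5` exceeding every element of `S`, put `x = l ^ s` and
`N = 1 + x + ⋯ + x ^ (t - 1)`, so that `N * (l ^ s - 1) = l ^ (s * t) - 1`. A prime `p < t`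
does not divide `N`: modulo `p`, either `x ≡ 1` and `N ≡ t`, or `x` has order `t`, which does
not divide `p - 1`. The complementary factor `l ^ s - 1` is smaller than `l ^ (s * t / 2)`. If the
order `r` of `l` modulo `N` were a proper divisor of `s * t`, the cofactor
`(l ^ (s * t) - 1) / (l ^ r - 1) ≥ l ^ (s * t - r)` would divide `l ^ s - 1`; so `r = s * t`.
Likewise `N ∣ l ^ (s * t / 2) + 1` would force `l ^ (s * t / 2) - 1 ∣ l ^ s - 1`. -/

open Finset

theorem Nat.Prime.not_dvd_geom_sum_of_lt {p t : ℕ} (hp : p.Prime) (ht : t.Prime) (hpt : p < t)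
    (x : ℕ) : ¬ p ∣ ∑ i ∈ range t, x ^ i := by
  have := Fact.mk hp
  have := Fact.mk ht
  intro hdvd
  have hsum : ∑ i ∈ range t, (x : ZMod p) ^ i = 0 := by
    exact_mod_cast (ZMod.natCast_eq_zero_iff _ p).2 hdvd
  by_cases hx : (x : ZMod p) = 1
  · simp only [hx, one_pow, sum_const, card_range, nsmul_eq_mul, mul_one] at hsum
    have := (Nat.prime_dvd_prime_iff_eq hp ht).1 ((ZMod.natCast_eq_zero_iff _ p).1 hsum)
    omega
  · have hpow : (x : ZMod p) ^ t = 1 := by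
      rw [← sub_eq_zero, ← geom_sum_mul, hsum, zero_mul]
    have hx₀ : (x : ZMod p) ≠ 0 := by
      rintro h
      rw [h, zero_pow ht.ne_zero] at hpow
      exact zero_ne_one hpow
    have := Nat.le_of_dvd (Nat.sub_pos_of_lt hp.one_lt)
      (orderOf_eq_prime hpow hx ▸ ZMod.orderOf_dvd_card_sub_one hx₀)
    omega

theorem Nat.pow_sub_le_of_pow_sub_one_mul_eq {a r m q : ℕ} (ha : 1 < a) (hr : 0 < r)
    (hrm : r ≤ m) (h : (a ^ r - 1) * q = a ^ m - 1) : a ^ (m - r) ≤ q := by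
  refine Nat.le_of_mul_le_mul_left ?_ (Nat.sub_pos_of_lt (Nat.one_lt_pow hr.ne' ha))
  rw [h, Nat.sub_mul, one_mul, ← pow_add, Nat.add_sub_cancel' hrm]
  exact Nat.sub_le_sub_left (Nat.one_le_pow _ _ (by omega)) _

theorem IsLeast.dvd_of_dvd_pow_sub_one {a N r k : ℕ}
    (hr : IsLeast {r | 0 < r ∧ N ∣ a ^ r - 1} r) (hk : N ∣ a ^ k - 1) : r ∣ k := by
  have hgcd : N ∣ a ^ Nat.gcd r k - 1 :=
    Nat.pow_sub_one_gcd_pow_sub_one a r k ▸ Nat.dvd_gcd hr.1.2 hk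
  have := hr.2 ⟨Nat.gcd_pos_of_pos_left k hr.1.1, hgcd⟩
  have := Nat.gcd_le_left k hr.1.1
  exact (show Nat.gcd r k = r by omega) ▸ Nat.gcd_dvd_right r k

theorem IsLeast.eq_of_mul_eq_pow_sub_one {a m N D r : ℕ} (ha : 1 < a) (hD₀ : 0 < D)
    (hND : N * D = a ^ m - 1) (hD : D < a ^ (m / 2))
    (hr : IsLeast {r | 0 < r ∧ N ∣ a ^ r - 1} r) : r = m := by
  obtain ⟨hr₀, hNr⟩ := hr.1
  have hN₀ : 0 < N := Nat.pos_of_ne_zero <| by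
    rintro rfl
    have := Nat.one_lt_pow hr₀.ne' ha
    omega
  have hm₀ : 0 < m := Nat.pos_of_ne_zero <| by
    rintro rfl
    simp only [pow_zero, Nat.sub_self, Nat.mul_eq_zero] at hND
    omega
  obtain ⟨n, rfl⟩ := hr.dvd_of_dvd_pow_sub_one ⟨D, hND.symm⟩
  by_contra hne
  have hn : 2 ≤ n := by
    rcases n with _ | _ | n <;> omega
  obtain ⟨q, hq⟩ := Nat.pow_sub_one_dvd_pow_sub_one a (dvd_mul_right r n)
  have hqD : q ∣ D :=
    Nat.dvd_of_mul_dvd_mul_left hN₀ (hND ▸ hq ▸ mul_dvd_mul_right hNr q)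
  have hq_ge :=
    Nat.pow_sub_le_of_pow_sub_one_mul_eq ha hr₀ (Nat.le_mul_of_pos_right r (by omega)) hq.symm
  have : a ^ (r * n / 2) ≤ a ^ (r * n - r) := Nat.pow_le_pow_right (by omega) (by
    have : r * 2 ≤ r * n := Nat.mul_le_mul_left r hn
    omega)
  have := Nat.le_of_dvd hD₀ hqD
  omega

theorem not_dvd_pow_half_add_one {a m N D : ℕ} (hm : Even m) (hD₀ : 0 < D)
    (hND : N * D = a ^ m - 1) (hD : D < a ^ (m / 2) - 1) : ¬ N ∣ a ^ (m / 2) + 1 := by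
  obtain ⟨h, rfl⟩ := hm
  rw [show (h + h) / 2 = h by omega] at hD ⊢
  intro hN
  have hN₀ : 0 < N := Nat.pos_of_ne_zero <| by
    rintro rfl
    omega
  have hfac : a ^ (h + h) - 1 = (a ^ h + 1) * (a ^ h - 1) := by
    rw [← Nat.sq_sub_sq, ← pow_mul, mul_two, one_pow]
  have := Nat.le_of_dvd hD₀ <|
    Nat.dvd_of_mul_dvd_mul_left hN₀ (hND ▸ hfac ▸ mul_dvd_mul_right hN (a ^ h - 1))
  omega

/-- Let `l` be a prime, `s` a positive integer, `S` a finite set of primes.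
There is an integer `N > 1`, not divisible by `l` nor by any prime in `S`, such that,
letting `r` be the multiplicative order of `l` modulo `N` (the least positive integer with
`N ∣ l ^ r - 1`), one has `s ∣ r`, and if `r` is even then `N ∤ l ^ (r / 2) + 1`. -/
theorem exists_N_order_divisible (l s : ℕ) (hl : l.Prime) (hs : 0 < s)
    (S : Finset ℕ) (hS : ∀ p ∈ S, p.Prime) :
    ∃ N : ℕ, 1 < N ∧ ¬ l ∣ N ∧ (∀ p ∈ S, ¬ p ∣ N) ∧
      ∀ r : ℕ, IsLeast {r : ℕ | 0 < r ∧ N ∣ l ^ r - 1} r →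
        s ∣ r ∧ (Even r → ¬ N ∣ l ^ (r / 2) + 1) := by
  obtain ⟨t, ht_ge, ht⟩ := Nat.exists_infinite_primes (S.sup id + 5)
  have hls : 1 < l ^ s := Nat.one_lt_pow hs.ne' hl.one_lt
  have hND : (∑ i ∈ range t, (l ^ s) ^ i) * (l ^ s - 1) = l ^ (s * t) - 1 := by
    rw [pow_mul]
    exact geom_sum_mul_of_one_le hls.le t
  have hD : l ^ s - 1 < l ^ (s * t / 2) - 1 := by
    have : l ^ s < l ^ (s * t / 2) := Nat.pow_lt_pow_right hl.one_lt (by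
      have : s * 5 ≤ s * t := Nat.mul_le_mul_left s (by omega)
      omega)
    omega
  refine ⟨∑ i ∈ range t, (l ^ s) ^ i, ?_, ?_, ?_, fun r hr => ?_⟩
  · have hst : s < s * t := lt_mul_of_one_lt_right hs (by omega)
    exact (Nat.one_lt_pow (Nat.sub_pos_of_lt hst).ne' hl.one_lt).trans_le
      (Nat.pow_sub_le_of_pow_sub_one_mul_eq hl.one_lt hs hst.le (by rw [mul_comm, hND]))
  · intro hlN
    have h := Nat.dvd_sub (dvd_pow_self l (mul_ne_zero hs.ne' ht.ne_zero))
      (hlN.trans ⟨l ^ s - 1, hND.symm⟩)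
    rw [Nat.sub_sub_self (Nat.one_le_pow _ _ hl.pos)] at h
    exact hl.not_dvd_one h
  · intro p hp
    have : p ≤ S.sup id := le_sup (f := id) hp
    exact (hS p hp).not_dvd_geom_sum_of_lt ht (by omega) _
  · obtain rfl := hr.eq_of_mul_eq_pow_sub_one hl.one_lt (by omega) hND (by omega)
    exact ⟨dvd_mul_right s t, fun he => not_dvd_pow_half_add_one he (by omega) hND hD⟩
end

section
/- Let l ≥ 2 and t ≥ 3 be integers. Then there exist odd primes A and B with A ∣ l^{2^{t−2}} + 1 and B ∣ l^{2^{t−1}} + 1. Moreover, for any odd primes A and B with A ∣ l^{2^{t−2}} + 1 and B ∣ l^{2^{t−1}} + 1, one has: A ≠ B, the product A·B divides l^{2^t} − 1, A·B does not divide l^{2^{t−1}} + 1, and the multiplicative order of l modulo A·B equals 2^t. -/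
/-!
Modulo an odd prime `p` dividing `l ^ 2 ^ k + 1` we have `l ^ 2 ^ k ≡ -1 ≢ 1`, so `l` has order
exactly `2 ^ (k + 1)`. Hence `l` has order `2 ^ (t - 1)` modulo `A` and `2 ^ t` modulo `B`; this
separates `A` from `B`, gives `A * B ∣ l ^ 2 ^ t - 1`, rules out `A ∣ l ^ 2 ^ (t - 1) + 1`, and
makes `2 ^ t` the least exponent already modulo `B`. Such primes exist because
`l ^ 2 ^ k + 1` with `k ≥ 1` is a square plus one, hence greater than `2` and not divisible by `4`,
so it is not a power of two.
-/

lemma not_four_dvd_sq_add_one (s : ℕ) : ¬ 4 ∣ s ^ 2 + 1 := by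
  intro h
  have h' : ((s ^ 2 + 1 : ℕ) : ZMod 4) = 0 := (ZMod.natCast_eq_zero_iff _ _).mpr h
  push_cast at h'
  generalize (s : ZMod 4) = x at h'
  revert x
  decide

lemma exists_odd_prime_dvd_pow_add_one {l n : ℕ} (hl : 2 ≤ l) (hn : Even n) (hn0 : n ≠ 0) :
    ∃ p, p.Prime ∧ Odd p ∧ p ∣ l ^ n + 1 := by
  obtain ⟨m, rfl⟩ := hn
  have hsq : l ^ (m + m) = (l ^ m) ^ 2 := by rw [← pow_mul, mul_two]
  have h2 : 2 < l ^ (m + m) + 1 := by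
    have := Nat.le_self_pow hn0 l
    omega
  obtain h4 | ⟨p, hp, hdvd, hodd⟩ := Nat.four_dvd_or_exists_odd_prime_and_dvd_of_two_lt h2
  · exact absurd (hsq ▸ h4) (not_four_dvd_sq_add_one _)
  · exact ⟨p, hp, hodd, hdvd⟩

lemma orderOf_eq_two_pow_succ_of_pow_eq_neg_one {R : Type*} [Ring R] {x : R} {k : ℕ}
    (h1 : (-1 : R) ≠ 1) (hx : x ^ 2 ^ k = -1) : orderOf x = 2 ^ (k + 1) :=
  orderOf_eq_prime_pow (by rwa [hx]) (by rw [pow_succ, pow_mul, hx, neg_one_sq])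

lemma orderOf_natCast_eq_two_pow_succ_of_dvd {p l k : ℕ} (hp : 2 < p) (h : p ∣ l ^ 2 ^ k + 1) :
    orderOf (l : ZMod p) = 2 ^ (k + 1) := by
  have : Fact (2 < p) := ⟨hp⟩
  refine orderOf_eq_two_pow_succ_of_pow_eq_neg_one ZMod.neg_one_ne_one ?_
  rw [eq_neg_iff_add_eq_zero, ← Nat.cast_pow, ← Nat.cast_succ]
  exact (ZMod.natCast_eq_zero_iff _ _).mpr h

lemma dvd_pow_sub_one_iff_orderOf_natCast_dvd {p l n : ℕ} (hl : 0 < l) :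
    p ∣ l ^ n - 1 ↔ orderOf (l : ZMod p) ∣ n := by
  rw [orderOf_dvd_iff_pow_eq_one, ← ZMod.natCast_eq_zero_iff,
    Nat.cast_sub (Nat.one_le_pow _ _ hl), sub_eq_zero, Nat.cast_pow, Nat.cast_one]

/-- For integers `l ≥ 2` and `t ≥ 3`, there exist odd primes `A`, `B` with
`A ∣ l ^ (2 ^ (t-2)) + 1` and `B ∣ l ^ (2 ^ (t-1)) + 1`; moreover any such odd primes `A`, `B`
satisfy `A ≠ B`, `A * B ∣ l ^ (2 ^ t) - 1`, `¬ A * B ∣ l ^ (2 ^ (t-1)) + 1`, and the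
multiplicative order of `l` modulo `A * B` is `2 ^ t`. -/
theorem odd_prime_divisors_of_fermat_like (l t : ℕ) (hl : 2 ≤ l) (ht : 3 ≤ t) :
    (∃ A B : ℕ, A.Prime ∧ Odd A ∧ A ∣ l ^ (2 ^ (t - 2)) + 1 ∧
      B.Prime ∧ Odd B ∧ B ∣ l ^ (2 ^ (t - 1)) + 1) ∧
    ∀ A B : ℕ, A.Prime → Odd A → A ∣ l ^ (2 ^ (t - 2)) + 1 →
      B.Prime → Odd B → B ∣ l ^ (2 ^ (t - 1)) + 1 →
      A ≠ B ∧ A * B ∣ l ^ (2 ^ t) - 1 ∧ ¬ A * B ∣ l ^ (2 ^ (t - 1)) + 1 ∧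
        IsLeast {r : ℕ | 0 < r ∧ A * B ∣ l ^ r - 1} (2 ^ t) := by
  obtain ⟨k, rfl⟩ : ∃ k, t = k + 1 + 2 := ⟨t - 3, by omega⟩
  simp only [Nat.add_sub_cancel, show k + 1 + 2 - 1 = k + 2 by omega]
  have hl0 : 0 < l := by omega
  refine ⟨?_, fun A B hA hAodd hAdvd hB hBodd hBdvd => ?_⟩
  · have even_two_pow {j : ℕ} (hj : j ≠ 0) : Even (2 ^ j) := Nat.even_pow.mpr ⟨even_two, hj⟩
    obtain ⟨A, hA⟩ :=
      exists_odd_prime_dvd_pow_add_one hl (even_two_pow k.succ_ne_zero) (by positivity)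
    obtain ⟨B, hB⟩ :=
      exists_odd_prime_dvd_pow_add_one hl (even_two_pow (k + 1).succ_ne_zero) (by positivity)
    exact ⟨A, B, hA.1, hA.2.1, hA.2.2, hB.1, hB.2.1, hB.2.2⟩
  have two_lt {p : ℕ} (hp : p.Prime) (hodd : Odd p) : 2 < p :=
    hp.two_le.lt_of_ne (hodd.ne_two_of_dvd_nat dvd_rfl).symm
  have hordA := orderOf_natCast_eq_two_pow_succ_of_dvd (two_lt hA hAodd) hAdvd
  have hordB := orderOf_natCast_eq_two_pow_succ_of_dvd (two_lt hB hBodd) hBdvd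
  have hAB : A ≠ B := by
    rintro rfl
    have := Nat.pow_right_injective le_rfl (hordA.symm.trans hordB)
    omega
  have hABdvd : A * B ∣ l ^ 2 ^ (k + 1 + 2) - 1 :=
    ((Nat.coprime_primes hA hB).mpr hAB).mul_dvd_of_dvd_of_dvd
      ((dvd_pow_sub_one_iff_orderOf_natCast_dvd hl0).mpr (hordA ▸ pow_dvd_pow 2 (by omega)))
      ((dvd_pow_sub_one_iff_orderOf_natCast_dvd hl0).mpr hordB.dvd)
  refine ⟨hAB, hABdvd, fun h => ?_, ⟨by positivity, hABdvd⟩, fun r ⟨hr, hdvd⟩ => ?_⟩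
  · have hordA' :=
      orderOf_natCast_eq_two_pow_succ_of_dvd (two_lt hA hAodd) ((dvd_mul_right A B).trans h)
    have := Nat.pow_right_injective le_rfl (hordA.symm.trans hordA')
    omega
  · have hBr := (dvd_pow_sub_one_iff_orderOf_natCast_dvd hl0).mp ((dvd_mul_left B A).trans hdvd)
    exact Nat.le_of_dvd hr (hordB ▸ hBr)
end

section
/- Let p be an odd prime, and let t ≥ 2 and l ≥ 2 be integers such that l^{p^{t−2}} ≡ 1 (mod p). Then Σ_{k=0}^{p−1} l^{k·p^{t−1}} ≡ p (mod p²); in particular, p² does not divide Σ_{k=0}^{p−1} l^{k·p^{t−1}}. -/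
/-!
Put `x = l ^ p ^ (t - 1) = (l ^ p ^ (t - 2)) ^ p`. Since `l ^ p ^ (t - 2) ≡ 1 (mod p)`, raising to
the `p`-th power gains a factor of `p`, so `x ≡ 1 (mod p²)`. The sum is the geometric sum
`∑_{k < p} x ^ k`, hence `≡ p (mod p²)`, and `p²` does not divide `p`.
-/

open Finset

theorem Nat.ModEq.pow_pow_self {n a b : ℕ} (h : a ≡ b [MOD n]) (k : ℕ) :
    a ^ n ^ k ≡ b ^ n ^ k [MOD n ^ (k + 1)] := by
  rw [Nat.modEq_iff_dvd] at h ⊢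
  push_cast
  exact dvd_sub_pow_of_dvd_sub h k

theorem Nat.ModEq.geom_sum_modEq {n x : ℕ} (h : x ≡ 1 [MOD n]) (m : ℕ) :
    ∑ i ∈ range m, x ^ i ≡ m [MOD n] := by
  simpa using Nat.ModEq.sum fun i (_ : i ∈ range m) => h.pow i

theorem cyclotomic_like_sum_mod_p_sq_general (p t l : ℕ) (hp : p.Prime)
    (ht : 2 ≤ t) (hcong : l ^ (p ^ (t - 2)) ≡ 1 [MOD p]) :
    (∑ k ∈ Finset.range p, l ^ (k * p ^ (t - 1))) ≡ p [MOD p ^ 2] ∧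
      ¬ p ^ 2 ∣ ∑ k ∈ Finset.range p, l ^ (k * p ^ (t - 1)) := by
  have hx : l ^ p ^ (t - 1) ≡ 1 [MOD p ^ 2] := by
    have := hcong.pow_pow_self 1
    rwa [one_pow, ← pow_mul, ← pow_add, show t - 2 + 1 = t - 1 by omega] at this
  have hsum : ∑ k ∈ range p, l ^ (k * p ^ (t - 1)) ≡ p [MOD p ^ 2] := by
    simpa only [mul_comm _ (p ^ (t - 1)), pow_mul] using hx.geom_sum_modEq p
  refine ⟨hsum, fun hdvd => ?_⟩
  have : p ^ 2 ∣ p ^ 1 := by simpa using (hsum.dvd_iff dvd_rfl).mp hdvd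
  have := (Nat.pow_dvd_pow_iff_le_right hp.one_lt).mp this
  omega

/-- Let `p` be an odd prime, `t ≥ 2`, `l ≥ 2`, with
`l ^ (p ^ (t-2)) ≡ 1 (mod p)`. Then `∑_{k=0}^{p-1} l ^ (k * p ^ (t-1)) ≡ p (mod p²)`;
in particular `p²` does not divide this sum. -/
theorem cyclotomic_like_sum_mod_p_sq (p t l : ℕ) (hp : p.Prime) (hpodd : Odd p)
    (ht : 2 ≤ t) (hl : 2 ≤ l) (hcong : l ^ (p ^ (t - 2)) ≡ 1 [MOD p]) :
    (∑ k ∈ Finset.range p, l ^ (k * p ^ (t - 1))) ≡ p [MOD p ^ 2] ∧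
      ¬ p ^ 2 ∣ ∑ k ∈ Finset.range p, l ^ (k * p ^ (t - 1)) :=
  cyclotomic_like_sum_mod_p_sq_general p t l hp ht hcong
end

section
/- Let n > 2 be an odd integer and let N be an odd integer with N > 100n + 100. Let B ⊆ ℤ/Nℤ be the image of the set of integers {1, 2, N−3} ∪ {(N−n+4)/2, (N−n+6)/2, …, (N+n−4)/2}, where the second set consists of the n−3 consecutive integers from (N−n+4)/2 to (N+n−4)/2 (and is empty when n = 3). If α ∈ (ℤ/Nℤ)^× is a unit with α·B = B (as subsets of ℤ/Nℤ), then α = 1. -/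
/-!
Since `1 ∈ B`, the unit `α` is itself an element of `B`, and we rule out every choice except
`α = 1`. If `α = 2` or `α = -3`, then `α · B` contains `-6 ∉ B`. The middle elements of `B` are
the `j / 2` with `j` odd and `|j| ≤ n - 4`; for such `α`, the element `2α` must be one of the small
elements `1, -3` of `B`, so `α = 1/2` or `α = -3/2`. Then `α · (1/2)` is `1/4` or `-3/4`, neither
of which lies in `B` since `N` is large compared to `n`.
-/

namespace ZMod

variable {N : ℕ} [NeZero N] {S : Set ℕ}

theorem natCast_mem_image_iff_val_mem (hS : ∀ k ∈ S, k < N) {x : ZMod N} :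
    x ∈ (fun k : ℕ => (k : ZMod N)) '' S ↔ x.val ∈ S := by
  constructor
  · rintro ⟨k, hk, rfl⟩
    rwa [val_natCast_of_lt (hS k hk)]
  · exact fun hx => ⟨x.val, hx, natCast_zmod_val x⟩

theorem val_mul_mod_mem_of_mapsTo (hS : ∀ k ∈ S, k < N) {a : ZMod N}
    (ha : Set.MapsTo (a * ·) ((fun k : ℕ => (k : ZMod N)) '' S) ((fun k : ℕ => (k : ZMod N)) '' S))
    {b : ℕ} (hb : b ∈ S) : a.val * b % N ∈ S := by
  have hab := ha (Set.mem_image_of_mem _ hb)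
  rwa [natCast_mem_image_iff_val_mem hS, val_mul, val_natCast_of_lt (hS b hb)] at hab

end ZMod

theorem Nat.exists_lt_eq_mul_add_mod {m N k : ℕ} (h : m < N * k) : ∃ q < k, m = N * q + m % N :=
  ⟨m / N, Nat.div_lt_of_lt_mul h, (Nat.div_add_mod m N).symm⟩

def bSet (n N : ℕ) : Set ℕ :=
  {1, 2, N - 3} ∪ (fun i : ℕ => (N - n + 4) / 2 + i) '' {i : ℕ | i < n - 3}

section bSet

variable {n N k : ℕ}

theorem mem_bSet_iff (hn : Odd n) (hN : Odd N) (hnN : n ≤ N) :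
    k ∈ bSet n N ↔ k = 1 ∨ k = 2 ∨ k = N - 3 ∨ (N + 4 ≤ 2 * k + n ∧ 2 * k + 4 ≤ N + n) := by
  obtain ⟨p, hp⟩ := hn
  obtain ⟨q, hq⟩ := hN
  simp only [bSet, Set.mem_union, Set.mem_insert_iff, Set.mem_singleton_iff, Set.mem_image,
    Set.mem_ofPred_eq, or_assoc]
  refine or_congr_right (or_congr_right (or_congr_right
    ⟨?_, fun h => ⟨k - (N - n + 4) / 2, by omega, by omega⟩⟩))
  rintro ⟨i, hi, rfl⟩
  omega

theorem lt_of_mem_bSet (hnN : n + 3 ≤ N) (hk : k ∈ bSet n N) : k < N := by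
  simp only [bSet, Set.mem_union, Set.mem_insert_iff, Set.mem_singleton_iff, Set.mem_image,
    Set.mem_ofPred_eq] at hk
  rcases hk with (rfl | rfl | rfl) | ⟨i, hi, rfl⟩ <;> omega

theorem sub_six_not_mem_bSet (hn : Odd n) (hN : Odd N) (hnN : n + 9 ≤ N) : N - 6 ∉ bSet n N := by
  rw [mem_bSet_iff hn hN (by omega)]
  omega

theorem two_mul_eq_of_two_mul_mod_mem_bSet (hn : Odd n) (hN : Odd N) (hnN : 3 * n < N)
    {a : ℕ} (ha : N + 4 ≤ 2 * a + n ∧ 2 * a + 4 ≤ N + n) (h2a : 2 * a % N ∈ bSet n N) :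
    2 * a = N + 1 ∨ 2 * a + 3 = N := by
  rw [mem_bSet_iff hn hN (by omega)] at h2a
  obtain ⟨q, hq, hdiv⟩ := Nat.exists_lt_eq_mul_add_mod (show 2 * a < N * 2 by omega)
  obtain ⟨p, rfl⟩ := hN
  interval_cases q <;> omega

theorem mul_half_mod_not_mem_bSet (hn : Odd n) (hN : Odd N) (hnN : 2 * n + 12 < N) {a : ℕ}
    (ha : 2 * a = N + 1 ∨ 2 * a + 3 = N) : a * ((N + 1) / 2) % N ∉ bSet n N := by
  intro hr
  set r := a * ((N + 1) / 2) % N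
  have hrN : r < N := Nat.mod_lt _ (by omega)
  have htwo_half : 2 * ((N + 1) / 2) = N + 1 := by
    obtain ⟨p, rfl⟩ := hN
    omega
  have h4r : 4 * r % N = 2 * a % N :=
    calc 4 * r % N = 2 * a * (2 * ((N + 1) / 2)) % N := by rw [Nat.mul_mod_mod]; ring_nf
      _ = (N * (2 * a) + 2 * a) % N := by rw [htwo_half]; ring_nf
      _ = 2 * a % N := Nat.mul_add_mod _ _ _
  -- `4 r` and `2 a` have small quotients by `N`; splitting on them leaves linear arithmetic.
  obtain ⟨q, hq, hdiv⟩ := Nat.exists_lt_eq_mul_add_mod (show 4 * r < N * 4 by omega)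
  obtain ⟨q', hq', hdiv'⟩ := Nat.exists_lt_eq_mul_add_mod (show 2 * a < N * 2 by omega)
  rw [mem_bSet_iff hn hN (by omega)] at hr
  obtain ⟨m, rfl⟩ := hn
  obtain ⟨p, rfl⟩ := hN
  interval_cases q <;> interval_cases q' <;> omega

theorem eq_one_of_forall_mul_mod_mem_bSet (hn : Odd n) (hN : Odd N) (hnN : 3 * n + 12 < N)
    {a : ℕ} (haN : a < N) (hmul : ∀ b ∈ bSet n N, a * b % N ∈ bSet n N) : a = 1 := by
  have hmem {k : ℕ} := mem_bSet_iff (k := k) hn hN (by omega)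
  have h2 : 2 ∈ bSet n N := hmem.2 (by omega)
  have h3 : N - 3 ∈ bSet n N := hmem.2 (by omega)
  have hsix : 2 * (N - 3) % N = N - 6 := by
    rw [show 2 * (N - 3) = N - 6 + N * 1 by omega, Nat.add_mul_mod_self_left,
      Nat.mod_eq_of_lt (by omega)]
  have ha : a ∈ bSet n N := by
    simpa [Nat.mod_eq_of_lt haN] using hmul 1 (hmem.2 (by omega))
  rcases hmem.1 ha with rfl | rfl | rfl | hmid
  · rfl
  · exact absurd (hsix ▸ hmul _ h3) (sub_six_not_mem_bSet hn hN (by omega))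
  · exact absurd (hsix ▸ mul_comm 2 (N - 3) ▸ hmul _ h2) (sub_six_not_mem_bSet hn hN (by omega))
  · have h2a := two_mul_eq_of_two_mul_mod_mem_bSet hn hN (by omega) hmid
      (by simpa only [mul_comm] using hmul _ h2)
    have hhalf : (N + 1) / 2 ∈ bSet n N := hmem.2 (by omega)
    exact absurd (hmul _ hhalf) (mul_half_mod_not_mem_bSet hn hN (by omega) h2a)

end bSet

theorem unit_fixing_b_set_is_one_odd_general (n N : ℕ) (hn : Odd n)
    (hN : Odd N) (hNn : 100 * n + 100 < N)
    (B : Set (ZMod N))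
    (hB : B = (fun k : ℕ => (k : ZMod N)) ''
      ({1, 2, N - 3} ∪ (fun i : ℕ => (N - n + 4) / 2 + i) '' {i : ℕ | i < n - 3}))
    (α : (ZMod N)ˣ) (hα : (fun x : ZMod N => (α : ZMod N) * x) '' B = B) :
    α = 1 := by
  have : NeZero N := ⟨by omega⟩
  have hlt : ∀ k ∈ bSet n N, k < N := fun k => lt_of_mem_bSet (by omega)
  have hmaps : Set.MapsTo ((α : ZMod N) * ·) (_ '' bSet n N) (_ '' bSet n N) :=
    Set.mapsTo_iff_image_subset.2 (hB ▸ hα.subset)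
  refine Units.ext ((ZMod.val_eq_one (by omega) _).1 ?_)
  exact eq_one_of_forall_mul_mod_mem_bSet hn hN (by omega) (ZMod.val_lt _)
    fun b hb => ZMod.val_mul_mod_mem_of_mapsTo hlt hmaps hb

/-- Let `n > 2` be odd and `N` odd with `N > 100n + 100`. Let
`B ⊆ ℤ/Nℤ` be the image of `{1, 2, N-3} ∪ {(N-n+4)/2, (N-n+6)/2, …, (N+n-4)/2}`,
the latter being the `n - 3` consecutive integers starting at `(N-n+4)/2`.
If a unit `α` of `ℤ/Nℤ` satisfies `α • B = B`, then `α = 1`. -/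
theorem unit_fixing_b_set_is_one_odd (n N : ℕ) (hn : Odd n) (hn2 : 2 < n)
    (hN : Odd N) (hNn : 100 * n + 100 < N)
    (B : Set (ZMod N))
    (hB : B = (fun k : ℕ => (k : ZMod N)) ''
      ({1, 2, N - 3} ∪ (fun i : ℕ => (N - n + 4) / 2 + i) '' {i : ℕ | i < n - 3}))
    (α : (ZMod N)ˣ) (hα : (fun x : ZMod N => (α : ZMod N) * x) '' B = B) :
    α = 1 :=
  unit_fixing_b_set_is_one_odd_general n N hn hN hNn B hB α hα
end

section
/- Let F be a finite field of cardinality q, let ψ: F → ℂ be a nontrivial additive character, let N ≥ 3 be an odd integer, and let χ be a ℂ-valued multiplicative character of F of order exactly N (so N divides q − 1). Then ∏_{s=1}^{N−1} g(χ^s, ψ) = q^{(N−1)/2} in ℂ. -/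
/-!
Since `χ` has odd order, `χ (-1) = 1`, so every nontrivial power `φ` of `χ` satisfies
`g(φ, ψ) g(φ⁻¹, ψ) = q`. Pairing `χ ^ s` with `χ ^ (N - s) = (χ ^ s)⁻¹` splits the `N - 1`
factors of the product into `(N - 1) / 2` pairs, each contributing `q`.
-/

namespace Finset

theorem prod_Icc_one_two_mul_eq_pow {M : Type*} [CommMonoid M] {f : ℕ → M} {c : M} (m : ℕ)
    (h : ∀ s ∈ Icc 1 (2 * m), f s * f (2 * m + 1 - s) = c) :
    ∏ s ∈ Icc 1 (2 * m), f s = c ^ m := by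
  rw [← Ico_add_one_right_eq_Icc, prod_Ico_eq_prod_range, Nat.add_sub_cancel, two_mul,
    prod_range_add, ← prod_range_reflect (fun k ↦ f (1 + (m + k))), ← prod_mul_distrib,
    pow_eq_prod_const]
  refine prod_congr rfl fun j hj ↦ ?_
  have hjm := mem_range.mp hj
  convert h (1 + j) (mem_Icc.mpr ⟨by omega, by omega⟩) using 3
  omega

end Finset

theorem gaussSum_mul_gaussSum_inv_eq_card {R R' : Type*} [Field R] [Fintype R] [CommRing R']
    [IsDomain R'] {χ : MulChar R R'} {ψ : AddChar R R'} (hχ : χ ≠ 1) (hχ_neg : χ (-1) = 1)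
    (hψ : ψ.IsPrimitive) :
    gaussSum χ ψ * gaussSum χ⁻¹ ψ = Fintype.card R := by
  rw [← mul_gaussSum_inv_eq_gaussSum χ⁻¹ ψ, MulChar.inv_apply', inv_neg_one, hχ_neg, one_mul,
    gaussSum_mul_gaussSum_eq_card hχ hψ]

theorem prod_gaussSum_pow_eq_card_pow_general (F : Type*) [Field F] [Fintype F]
    (ψ : AddChar F ℂ) (hψ : ψ ≠ 1)
    (N : ℕ) (hNodd : Odd N)
    (χ : MulChar F ℂ) (hχ : orderOf χ = N) :
    ∏ s ∈ Finset.Icc 1 (N - 1), gaussSum (χ ^ s) ψ =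
      (Fintype.card F : ℂ) ^ ((N - 1) / 2) := by
  obtain ⟨m, rfl⟩ := hNodd
  have hχN : χ ^ (2 * m + 1) = 1 := hχ ▸ pow_orderOf_eq_one χ
  rw [Nat.add_sub_cancel, Nat.mul_div_cancel_left m two_pos]
  refine Finset.prod_Icc_one_two_mul_eq_pow m fun s hs ↦ ?_
  obtain ⟨hs_pos, hs_lt⟩ := Finset.mem_Icc.mp hs
  have hχ_inv : χ ^ (2 * m + 1 - s) = (χ ^ s)⁻¹ := by
    rw [pow_sub χ (by omega), hχN, one_mul]
  rw [hχ_inv]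
  refine gaussSum_mul_gaussSum_inv_eq_card ?_ ?_ (AddChar.IsPrimitive.of_ne_one hψ)
  · exact pow_ne_one_of_lt_orderOf (by omega) (by omega)
  · refine MulChar.val_neg_one_eq_one_of_odd_order (odd_two_mul_add_one m) ?_
    rw [← pow_mul, mul_comm, pow_mul, hχN, one_pow]

/-- Let `F` be a finite field with `q` elements, `ψ` a nontrivial additive
character of `F` with values in `ℂ`, `N ≥ 3` an odd integer and `χ` a multiplicative character
of `F` of order exactly `N`. Then `∏_{s=1}^{N-1} g(χ^s, ψ) = q ^ ((N-1)/2)`. -/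
theorem prod_gaussSum_pow_eq_card_pow (F : Type*) [Field F] [Fintype F]
    (ψ : AddChar F ℂ) (hψ : ψ ≠ 1)
    (N : ℕ) (hN : 3 ≤ N) (hNodd : Odd N)
    (χ : MulChar F ℂ) (hχ : orderOf χ = N) :
    ∏ s ∈ Finset.Icc 1 (N - 1), gaussSum (χ ^ s) ψ =
      (Fintype.card F : ℂ) ^ ((N - 1) / 2) :=
  prod_gaussSum_pow_eq_card_pow_general F ψ hψ N hNodd χ hχ
end
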